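/- arXiv:1308.1071 — 3 statements merged into one kernel-verified Lean document; each statement's English description precedes it below -/
import Mathlib

section
/- In U_q(sl_2) over ℂ with q not a root of unity, if x lies in the kernel of every finite-dimensional representation of the form V_{1,n} (the (n+1)-dimensional irreducible of type 1), then x = 0. -/
/-!
The monomials `F ^ a * E ^ c * K ^ z` (`a c : ℕ`, `z : ℤ`) span `U_q(sl₂)`: their span contains `1`
and is stable under left multiplication by the generators (for `E`, push it through `F ^ a` with
the relation `EF - FE = (K - K⁻¹)/(q - q⁻¹)`). Write `x` in these monomials; we show that all
coefficients `x_{a,c,z}` vanish, by strong induction on `c`.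

On `V_{1,n}` with basis `v_0, …, v_n`, the monomial `F ^ a * E ^ c * K ^ z` sends `v_C` to a
multiple of `v_{C-c+a}` which vanishes for `c > C`. Once the coefficients with `c < C` vanish, the
`v_{a₀}`-coordinate of `x v_C` is therefore a nonzero factor times `∑_z x_{a₀,C,z} q^{z(n-2C)}`.
This vanishes for all large `n`, and as the `q ^ z` are pairwise distinct, the linear independence
of the geometric sequences `k ↦ (q ^ z) ^ k` forces `x_{a₀,C,z} = 0`.
-/

noncomputable section

/-- Generators of U_q(sl₂). -/
inductive UqGen | E | F | K | Kinv

open UqGen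

/-- Defining relations of U_q(sl₂). -/
inductive UqRel (q : ℂ) : FreeAlgebra ℂ UqGen → FreeAlgebra ℂ UqGen → Prop
  | KKinv : UqRel q (FreeAlgebra.ι ℂ K * FreeAlgebra.ι ℂ Kinv) 1
  | KinvK : UqRel q (FreeAlgebra.ι ℂ Kinv * FreeAlgebra.ι ℂ K) 1
  | KE : UqRel q (FreeAlgebra.ι ℂ K * FreeAlgebra.ι ℂ E)
      (q ^ 2 • (FreeAlgebra.ι ℂ E * FreeAlgebra.ι ℂ K))
  | KF : UqRel q (FreeAlgebra.ι ℂ K * FreeAlgebra.ι ℂ F)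
      ((q⁻¹) ^ 2 • (FreeAlgebra.ι ℂ F * FreeAlgebra.ι ℂ K))
  | EF : UqRel q (FreeAlgebra.ι ℂ E * FreeAlgebra.ι ℂ F - FreeAlgebra.ι ℂ F * FreeAlgebra.ι ℂ E)
      ((q - q⁻¹)⁻¹ • (FreeAlgebra.ι ℂ K - FreeAlgebra.ι ℂ Kinv))

/-- U_q(sl₂) as a quotient of the free algebra. -/
abbrev Uq (q : ℂ) := RingQuot (UqRel q)

/-- The images of the generators in U_q(sl₂). -/
def UqMk (q : ℂ) (g : UqGen) : Uq q := RingQuot.mkAlgHom ℂ (UqRel q) (FreeAlgebra.ι ℂ g)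

/-- The quantum integer [m]_q. -/
def qInt (q : ℂ) (m : ℕ) : ℂ := (q ^ m - q⁻¹ ^ m) / (q - q⁻¹)

/-- Action of K on V_{1,n}: K·vⱼ = q^(n-2j) vⱼ. -/
def KMat (q : ℂ) (n : ℕ) : Matrix (Fin (n + 1)) (Fin (n + 1)) ℂ :=
  Matrix.diagonal fun j => q ^ ((n : ℤ) - 2 * (j : ℤ))

/-- Action of K⁻¹ on V_{1,n}. -/
def KinvMat (q : ℂ) (n : ℕ) : Matrix (Fin (n + 1)) (Fin (n + 1)) ℂ :=
  Matrix.diagonal fun j => q ^ (2 * (j : ℤ) - (n : ℤ))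

/-- Action of E on V_{1,n}: E·vⱼ = [j] vⱼ₋₁. -/
def EMat (q : ℂ) (n : ℕ) : Matrix (Fin (n + 1)) (Fin (n + 1)) ℂ :=
  Matrix.of fun i j => if (i : ℕ) + 1 = (j : ℕ) then qInt q j else 0

/-- Action of F on V_{1,n}: F·vⱼ = [n-j] vⱼ₊₁. -/
def FMat (q : ℂ) (n : ℕ) : Matrix (Fin (n + 1)) (Fin (n + 1)) ℂ :=
  Matrix.of fun i j => if (i : ℕ) = (j : ℕ) + 1 then qInt q (n - (j : ℕ)) else 0

theorem mul_pow_eq_smul_pow_mul {R A : Type*} [CommSemiring R] [Semiring A] [Algebra R A]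
    {a x : A} {c : R} (h : a * x = c • (x * a)) (m : ℕ) : a * x ^ m = c ^ m • (x ^ m * a) := by
  induction m with
  | zero => simp
  | succ m ih =>
    rw [pow_succ, ← mul_assoc, ih, smul_mul_assoc, mul_assoc, h, mul_smul_comm, smul_smul,
      ← mul_assoc, pow_succ]

theorem Submodule.eq_top_of_one_mem_of_mul_mem {R A : Type*} [CommSemiring R] [Semiring A]
    [Algebra R A] {s : Set A} (hs : Algebra.adjoin R s = ⊤) (S : Submodule R A) (h1 : 1 ∈ S)
    (hmul : ∀ a ∈ s, ∀ x ∈ S, a * x ∈ S) : S = ⊤ := by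
  have key : ∀ y ∈ Algebra.adjoin R s, ∀ x ∈ S, y * x ∈ S := fun y hy => by
    induction hy using Algebra.adjoin_induction with
    | mem a ha => exact hmul a ha
    | algebraMap r => exact fun x hx => by rw [← Algebra.smul_def]; exact S.smul_mem r hx
    | add _ _ _ _ ihy ihz =>
      exact fun x hx => by rw [add_mul]; exact add_mem (ihy x hx) (ihz x hx)
    | mul _ _ _ _ ihy ihz => exact fun x hx => by rw [mul_assoc]; exact ihy _ (ihz x hx)
  refine eq_top_iff'.mpr fun y => ?_
  simpa using key y (hs ▸ Algebra.mem_top) 1 h1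

open Matrix in
theorem Matrix.units_zpow_mulVec {m 𝕜 : Type*} [Fintype m] [DecidableEq m] [Field 𝕜]
    (U : (Matrix m m 𝕜)ˣ) {v : m → 𝕜} {c : 𝕜} (hc : c ≠ 0) (h : (U : Matrix m m 𝕜) *ᵥ v = c • v)
    (z : ℤ) : ((U ^ z : (Matrix m m 𝕜)ˣ) : Matrix m m 𝕜) *ᵥ v = c ^ z • v := by
  have hinv : ((U⁻¹ : (Matrix m m 𝕜)ˣ) : Matrix m m 𝕜) *ᵥ v = c⁻¹ • v := by
    rw [eq_inv_smul_iff₀ hc, ← mulVec_smul, ← h, mulVec_mulVec, Units.inv_mul, one_mulVec]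
  induction z using Int.induction_on with
  | zero => simp
  | succ i ih =>
    rw [_root_.zpow_add_one, Units.val_mul, ← mulVec_mulVec, h, mulVec_smul, ih, smul_smul,
      zpow_add_one₀ hc, mul_comm]
  | pred i ih =>
    rw [_root_.zpow_sub_one, Units.val_mul, ← mulVec_mulVec, hinv, mulVec_smul, ih, smul_smul,
      zpow_sub_one₀ hc, mul_comm]

theorem Finset.eq_zero_of_sum_mul_pow_eq_zero {R ι : Type*} [CommRing R] [IsDomain R]
    {s : Finset ι} {r : ι → R} (hr : Set.InjOn r s) {f : ι → R}
    (h : ∀ k : ℕ, ∑ i ∈ s, f i * r i ^ k = 0) : ∀ i ∈ s, f i = 0 := by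
  have hli : LinearIndependent R fun i : s => ⇑(powersHom R (r i)) :=
    (linearIndependent_monoidHom (Multiplicative ℕ) R).comp _
      fun i j hij => Subtype.ext (hr i.2 j.2 ((powersHom R).injective hij))
  intro i hi
  refine Fintype.linearIndependent_iff.mp hli (fun i => f i) ?_ ⟨i, hi⟩
  ext k
  have hk := h k.toAdd
  rw [← Finset.sum_coe_sort] at hk
  simpa [powersHom_apply] using hk

namespace Uq

open Finset

variable {q : ℂ}

theorem zpow_injective_of_pow_ne_one (hq0 : q ≠ 0) (hroot : ∀ n : ℕ, 0 < n → q ^ n ≠ 1) :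
    Function.Injective (q ^ · : ℤ → ℂ) := by
  have hfin : ¬IsOfFinOrder (Units.mk0 q hq0) := by
    rintro (h : IsOfFinOrder _)
    obtain ⟨n, hn, hpow⟩ := isOfFinOrder_iff_pow_eq_one.mp h
    exact hroot n hn (by simpa [Units.ext_iff] using hpow)
  intro a b hab
  exact injective_zpow_iff_not_isOfFinOrder.mpr hfin (Units.ext (by simpa using hab))

theorem qInt_zero : qInt q 0 = 0 := by simp [qInt]

theorem qInt_ne_zero (hinj : Function.Injective (q ^ · : ℤ → ℂ)) {m : ℕ} (hm : m ≠ 0) :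
    qInt q m ≠ 0 := by
  have hsub : ∀ k : ℕ, k ≠ 0 → q ^ k - q⁻¹ ^ k ≠ 0 := fun k hk h => by
    have := @hinj k (-k) (by simpa [zpow_neg, sub_eq_zero] using h)
    omega
  exact div_ne_zero (hsub m hm) (by simpa using hsub 1 one_ne_zero)

def qDescFactorial (q : ℂ) (m k : ℕ) : ℂ := ∏ t ∈ range k, qInt q (m - t)

theorem qDescFactorial_succ (m k : ℕ) :
    qDescFactorial q m (k + 1) = qInt q m * qDescFactorial q (m - 1) k := by
  simp only [qDescFactorial, prod_range_succ', Nat.sub_zero, Nat.sub_sub, add_comm 1, mul_comm]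

theorem qDescFactorial_eq_zero {m k : ℕ} (h : m < k) : qDescFactorial q m k = 0 :=
  prod_eq_zero (mem_range.mpr h) (by rw [Nat.sub_self, qInt_zero])

theorem qDescFactorial_ne_zero (hinj : Function.Injective (q ^ · : ℤ → ℂ)) {m k : ℕ}
    (h : k ≤ m) : qDescFactorial q m k ≠ 0 :=
  prod_ne_zero_iff.mpr fun t ht => qInt_ne_zero hinj (by have := mem_range.mp ht; omega)

theorem K_mul_Kinv : UqMk q K * UqMk q Kinv = 1 := by
  simpa [UqMk] using RingQuot.mkAlgHom_rel ℂ (UqRel.KKinv (q := q))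

theorem Kinv_mul_K : UqMk q Kinv * UqMk q K = 1 := by
  simpa [UqMk] using RingQuot.mkAlgHom_rel ℂ (UqRel.KinvK (q := q))

theorem K_mul_E : UqMk q K * UqMk q E = q ^ 2 • (UqMk q E * UqMk q K) := by
  simpa [UqMk] using RingQuot.mkAlgHom_rel ℂ (UqRel.KE (q := q))

theorem K_mul_F : UqMk q K * UqMk q F = q⁻¹ ^ 2 • (UqMk q F * UqMk q K) := by
  simpa [UqMk] using RingQuot.mkAlgHom_rel ℂ (UqRel.KF (q := q))

theorem E_mul_F : UqMk q E * UqMk q F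
    = UqMk q F * UqMk q E + (q - q⁻¹)⁻¹ • (UqMk q K - UqMk q Kinv) := by
  rw [← sub_eq_iff_eq_add']
  simpa [UqMk] using RingQuot.mkAlgHom_rel ℂ (UqRel.EF (q := q))

theorem adjoin_range_UqMk : Algebra.adjoin ℂ (Set.range (UqMk q)) = ⊤ := by
  rw [show UqMk q = RingQuot.mkAlgHom ℂ (UqRel q) ∘ FreeAlgebra.ι ℂ from rfl, Set.range_comp,
    ← AlgHom.map_adjoin, FreeAlgebra.adjoin_range_ι, Algebra.map_top, AlgHom.range_eq_top]
  exact RingQuot.mkAlgHom_surjective ℂ (UqRel q)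

def Kunit (q : ℂ) : (Uq q)ˣ := ⟨UqMk q K, UqMk q Kinv, K_mul_Kinv, Kinv_mul_K⟩

def pbw (q : ℂ) (p : ℕ × ℕ × ℤ) : Uq q := UqMk q F ^ p.1 * UqMk q E ^ p.2.1 * ↑(Kunit q ^ p.2.2)

theorem pbw_zero : pbw q (0, 0, 0) = 1 := by simp [pbw]

theorem F_mul_pbw (a c : ℕ) (z : ℤ) : UqMk q F * pbw q (a, c, z) = pbw q (a + 1, c, z) := by
  simp only [pbw, pow_succ', mul_assoc]

theorem E_mul_pbw_zero (c : ℕ) (z : ℤ) : UqMk q E * pbw q (0, c, z) = pbw q (0, c + 1, z) := by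
  simp only [pbw, pow_zero, one_mul, pow_succ', mul_assoc]

theorem E_mul_pbw_succ (a c : ℕ) (z : ℤ) :
    UqMk q E * pbw q (a + 1, c, z) = UqMk q F * (UqMk q E * pbw q (a, c, z))
      + (q - q⁻¹)⁻¹ • (UqMk q K * pbw q (a, c, z) - UqMk q Kinv * pbw q (a, c, z)) := by
  rw [← F_mul_pbw, ← mul_assoc, E_mul_F, add_mul, smul_mul_assoc, sub_mul, mul_assoc]

theorem K_mul_pbw (a c : ℕ) (z : ℤ) :
    UqMk q K * pbw q (a, c, z) = ((q⁻¹ ^ 2) ^ a * (q ^ 2) ^ c) • pbw q (a, c, z + 1) := by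
  have hKz : UqMk q K * ↑(Kunit q ^ z) = ↑(Kunit q ^ (z + 1)) := by
    rw [add_comm, zpow_one_add, Units.val_mul]; rfl
  simp only [pbw, ← mul_assoc, mul_pow_eq_smul_pow_mul K_mul_F, smul_mul_assoc]
  simp only [mul_assoc, mul_pow_eq_smul_pow_mul K_mul_E, smul_mul_assoc, mul_smul_comm, hKz,
    smul_smul]

theorem Kinv_mul_pbw (hq0 : q ≠ 0) (a c : ℕ) (z : ℤ) :
    UqMk q Kinv * pbw q (a, c, z + 1) = ((q⁻¹ ^ 2) ^ a * (q ^ 2) ^ c)⁻¹ • pbw q (a, c, z) := by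
  rw [eq_inv_smul_iff₀ (by simp [hq0]), ← mul_smul_comm, ← K_mul_pbw, ← mul_assoc, Kinv_mul_K,
    one_mul]

theorem mul_mem_span_pbw {y : Uq q} (h : ∀ p, y * pbw q p ∈ Submodule.span ℂ (Set.range (pbw q)))
    {x : Uq q} (hx : x ∈ Submodule.span ℂ (Set.range (pbw q))) :
    y * x ∈ Submodule.span ℂ (Set.range (pbw q)) :=
  Submodule.span_le (p := (Submodule.span ℂ _).comap (LinearMap.mulLeft ℂ y)).mpr
    (by rintro _ ⟨p, rfl⟩; exact h p) hx

theorem span_pbw_eq_top (hq0 : q ≠ 0) : Submodule.span ℂ (Set.range (pbw q)) = ⊤ := by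
  set S := Submodule.span ℂ (Set.range (pbw q))
  have mem (p) : pbw q p ∈ S := Submodule.subset_span ⟨p, rfl⟩
  have hF (x) (hx : x ∈ S) : UqMk q F * x ∈ S :=
    mul_mem_span_pbw (fun ⟨a, c, z⟩ => F_mul_pbw a c z ▸ mem _) hx
  have hK (x) (hx : x ∈ S) : UqMk q K * x ∈ S :=
    mul_mem_span_pbw (fun ⟨a, c, z⟩ => K_mul_pbw a c z ▸ S.smul_mem _ (mem _)) hx
  have hKinv (x) (hx : x ∈ S) : UqMk q Kinv * x ∈ S :=
    mul_mem_span_pbw (fun ⟨a, c, z⟩ => by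
      rw [← sub_add_cancel z 1, Kinv_mul_pbw hq0]; exact S.smul_mem _ (mem _)) hx
  have hE (x) (hx : x ∈ S) : UqMk q E * x ∈ S :=
    mul_mem_span_pbw (fun ⟨a, c, z⟩ => by
      induction a with
      | zero => exact E_mul_pbw_zero c z ▸ mem _
      | succ a ih =>
        rw [E_mul_pbw_succ]
        exact add_mem (hF _ ih) (S.smul_mem _ (sub_mem (hK _ (mem _)) (hKinv _ (mem _))))) hx
  refine Submodule.eq_top_of_one_mem_of_mul_mem adjoin_range_UqMk S (pbw_zero ▸ mem _) ?_
  rintro _ ⟨g, rfl⟩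
  cases g
  exacts [hE, hF, hK, hKinv]

section Representation

open Matrix

variable {n : ℕ}

/-- Indexed by `ℕ` so that `E` and `F` can shift it; `basisVec n j = 0` for `j > n`. -/
def basisVec (n j : ℕ) : Fin (n + 1) → ℂ := fun i => if (i : ℕ) = j then 1 else 0

theorem basisVec_val (i : Fin (n + 1)) : basisVec n i = Pi.single i 1 := by
  ext k
  simp [basisVec, Pi.single_apply, Fin.val_eq_val]

theorem matrix_ext_basisVec {M N : Matrix (Fin (n + 1)) (Fin (n + 1)) ℂ}
    (h : ∀ j ≤ n, M *ᵥ basisVec n j = N *ᵥ basisVec n j) : M = N :=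
  ext_of_mulVec_single fun i => by simpa [basisVec_val] using h i (Nat.lt_succ_iff.mp i.isLt)

theorem diagonal_mulVec_basisVec (d : ℕ → ℂ) (j : ℕ) :
    diagonal (fun i : Fin (n + 1) => d i) *ᵥ basisVec n j = d j • basisVec n j := by
  ext i
  by_cases h : (i : ℕ) = j <;> simp [mulVec_diagonal, basisVec, h]

theorem KMat_mulVec_basisVec (j : ℕ) :
    KMat q n *ᵥ basisVec n j = q ^ ((n : ℤ) - 2 * j) • basisVec n j :=
  diagonal_mulVec_basisVec (fun j => q ^ ((n : ℤ) - 2 * j)) j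

theorem KinvMat_mulVec_basisVec (j : ℕ) :
    KinvMat q n *ᵥ basisVec n j = q ^ (2 * (j : ℤ) - n) • basisVec n j :=
  diagonal_mulVec_basisVec (fun j => q ^ (2 * (j : ℤ) - n)) j

theorem EMat_mulVec_basisVec {j : ℕ} (hj : j ≤ n) :
    EMat q n *ᵥ basisVec n j = qInt q j • basisVec n (j - 1) := by
  rw [show basisVec n j = basisVec n (⟨j, by omega⟩ : Fin (n + 1)) from rfl, basisVec_val,
    mulVec_single_one]
  ext i
  by_cases h : (i : ℕ) + 1 = j
  · subst h
    simp [EMat, basisVec]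
  · rcases Nat.eq_zero_or_pos j with rfl | hj0
    · simp [EMat, qInt_zero]
    · simp [EMat, basisVec, h, show (i : ℕ) ≠ j - 1 by omega]

theorem FMat_mulVec_basisVec (j : ℕ) :
    FMat q n *ᵥ basisVec n j = qInt q (n - j) • basisVec n (j + 1) := by
  rcases lt_or_ge j n with hj | hj
  · rw [show basisVec n j = basisVec n (⟨j, by omega⟩ : Fin (n + 1)) from rfl, basisVec_val,
      mulVec_single_one]
    ext i
    by_cases h : (i : ℕ) = j + 1 <;> simp [FMat, basisVec, h]
  · rw [Nat.sub_eq_zero_of_le hj, qInt_zero, zero_smul]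
    ext i
    simp only [mulVec, dotProduct, FMat, basisVec, of_apply, Pi.zero_apply]
    refine sum_eq_zero fun k _ => ?_
    by_cases h : (i : ℕ) = k + 1 <;> by_cases h' : (k : ℕ) = j <;> simp [h, h'] <;> omega

theorem KMat_mul_KinvMat (hq0 : q ≠ 0) : KMat q n * KinvMat q n = 1 :=
  matrix_ext_basisVec fun j _ => by
    rw [← mulVec_mulVec, KinvMat_mulVec_basisVec, mulVec_smul, KMat_mulVec_basisVec, smul_smul,
      ← zpow_add₀ hq0, one_mulVec, sub_add_sub_cancel', sub_self, zpow_zero, one_smul]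

theorem KinvMat_mul_KMat (hq0 : q ≠ 0) : KinvMat q n * KMat q n = 1 :=
  matrix_ext_basisVec fun j _ => by
    rw [← mulVec_mulVec, KMat_mulVec_basisVec, mulVec_smul, KinvMat_mulVec_basisVec, smul_smul,
      ← zpow_add₀ hq0, one_mulVec, sub_add_sub_cancel', sub_self, zpow_zero, one_smul]

theorem KMat_mul_EMat (hq0 : q ≠ 0) : KMat q n * EMat q n = q ^ 2 • (EMat q n * KMat q n) :=
  matrix_ext_basisVec fun j hj => by
    rw [← mulVec_mulVec, smul_mulVec, ← mulVec_mulVec, EMat_mulVec_basisVec hj, mulVec_smul,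
      KMat_mulVec_basisVec, KMat_mulVec_basisVec, mulVec_smul, EMat_mulVec_basisVec hj,
      smul_smul, smul_smul, smul_smul]
    rcases j with _ | j
    · simp [qInt_zero]
    · rw [Nat.add_sub_cancel, show (n : ℤ) - 2 * j = 2 + (n - 2 * (j + 1 : ℕ)) by push_cast; ring,
        zpow_add₀ hq0, zpow_ofNat]
      congr 1
      ring

theorem KMat_mul_FMat (hq0 : q ≠ 0) : KMat q n * FMat q n = q⁻¹ ^ 2 • (FMat q n * KMat q n) :=
  matrix_ext_basisVec fun j hj => by
    rw [← mulVec_mulVec, smul_mulVec, ← mulVec_mulVec, FMat_mulVec_basisVec, mulVec_smul,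
      KMat_mulVec_basisVec, KMat_mulVec_basisVec, mulVec_smul, FMat_mulVec_basisVec,
      smul_smul, smul_smul, smul_smul]
    rw [show (n : ℤ) - 2 * (j + 1 : ℕ) = -2 + (n - 2 * j) by push_cast; ring, zpow_add₀ hq0]
    simp only [_root_.zpow_neg, zpow_ofNat, inv_pow]
    congr 1
    ring

theorem EMat_mul_FMat_mulVec {j : ℕ} (hj : j ≤ n) :
    (EMat q n * FMat q n) *ᵥ basisVec n j = (qInt q (n - j) * qInt q (j + 1)) • basisVec n j := by
  rw [← mulVec_mulVec, FMat_mulVec_basisVec, mulVec_smul]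
  rcases hj.lt_or_eq with hj | rfl
  · rw [EMat_mulVec_basisVec (j := j + 1) hj, smul_smul, Nat.add_sub_cancel]
  · simp [qInt_zero]

theorem FMat_mul_EMat_mulVec {j : ℕ} (hj : j ≤ n) :
    (FMat q n * EMat q n) *ᵥ basisVec n j = (qInt q j * qInt q (n - j + 1)) • basisVec n j := by
  rw [← mulVec_mulVec, EMat_mulVec_basisVec hj, mulVec_smul, FMat_mulVec_basisVec, smul_smul]
  rcases Nat.eq_zero_or_pos j with rfl | hj0
  · simp [qInt_zero]
  · rw [Nat.sub_add_cancel hj0, show n - (j - 1) = n - j + 1 by omega]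

theorem qInt_mul_succ_sub_mul_succ (hq0 : q ≠ 0) {j : ℕ} (hj : j ≤ n) :
    qInt q (n - j) * qInt q (j + 1) - qInt q j * qInt q (n - j + 1)
      = (q - q⁻¹)⁻¹ * (q ^ ((n : ℤ) - 2 * j) - q ^ (2 * (j : ℤ) - n)) := by
  by_cases hd : q - q⁻¹ = 0
  · simp [qInt, hd] -- at `q = ±1` both sides are `0`, as `x / 0 = 0`
  obtain ⟨m, rfl⟩ := Nat.exists_eq_add_of_le hj
  rw [Nat.add_sub_cancel_left, show ((j + m : ℕ) : ℤ) - 2 * j = m - j by push_cast; ring,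
    show 2 * (j : ℤ) - (j + m : ℕ) = j - m by push_cast; ring, zpow_sub₀ hq0, zpow_sub₀ hq0]
  simp only [qInt, zpow_natCast, pow_succ, inv_pow]
  rw [div_mul_div_comm, div_mul_div_comm, div_sub_div_same, eq_comm, inv_mul_eq_div,
    div_eq_div_iff hd (mul_ne_zero hd hd)]
  ring

theorem EMat_mul_FMat_sub (hq0 : q ≠ 0) :
    EMat q n * FMat q n - FMat q n * EMat q n = (q - q⁻¹)⁻¹ • (KMat q n - KinvMat q n) :=
  matrix_ext_basisVec fun j hj => by
    rw [sub_mulVec, EMat_mul_FMat_mulVec hj, FMat_mul_EMat_mulVec hj, smul_mulVec,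
      sub_mulVec, KMat_mulVec_basisVec, KinvMat_mulVec_basisVec, ← sub_smul, ← sub_smul,
      smul_smul, qInt_mul_succ_sub_mul_succ hq0 hj]

def genMat (q : ℂ) (n : ℕ) : UqGen → Matrix (Fin (n + 1)) (Fin (n + 1)) ℂ
  | .E => EMat q n
  | .F => FMat q n
  | .K => KMat q n
  | .Kinv => KinvMat q n

/-- The representation `V_{1,n}`. -/
def rep (hq0 : q ≠ 0) (n : ℕ) : Uq q →ₐ[ℂ] Matrix (Fin (n + 1)) (Fin (n + 1)) ℂ :=
  RingQuot.liftAlgHom ℂ ⟨FreeAlgebra.lift ℂ (genMat q n), by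
    rintro _ _ ⟨⟩ <;>
      simp only [map_mul, map_smul, map_sub, map_one, FreeAlgebra.lift_ι_apply, genMat]
    exacts [KMat_mul_KinvMat hq0, KinvMat_mul_KMat hq0, KMat_mul_EMat hq0, KMat_mul_FMat hq0,
      EMat_mul_FMat_sub hq0]⟩

@[simp]
theorem rep_UqMk (hq0 : q ≠ 0) (n : ℕ) (g : UqGen) : rep hq0 n (UqMk q g) = genMat q n g := by
  rw [UqMk, rep, RingQuot.liftAlgHom_mkAlgHom_apply, FreeAlgebra.lift_ι_apply]

theorem rep_Kunit_zpow_mulVec (hq0 : q ≠ 0) (z : ℤ) (j : ℕ) :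
    rep hq0 n ↑(Kunit q ^ z) *ᵥ basisVec n j = q ^ (z * ((n : ℤ) - 2 * j)) • basisVec n j := by
  let ρ : Uq q →* Matrix (Fin (n + 1)) (Fin (n + 1)) ℂ := rep hq0 n
  have hK : ↑(Units.map ρ (Kunit q)) = KMat q n := rep_UqMk hq0 n K
  rw [show rep hq0 n ↑(Kunit q ^ z) = ↑(Units.map ρ (Kunit q) ^ z) by
      rw [← map_zpow, Units.coe_map]; rfl,
    units_zpow_mulVec _ (zpow_ne_zero _ hq0) (hK ▸ KMat_mulVec_basisVec j), ← _root_.zpow_mul,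
    mul_comm]

theorem EMat_pow_mulVec_basisVec {C : ℕ} (hC : C ≤ n) (c : ℕ) :
    EMat q n ^ c *ᵥ basisVec n C = qDescFactorial q C c • basisVec n (C - c) := by
  induction c generalizing C with
  | zero => simp [qDescFactorial]
  | succ c ih =>
    rw [pow_succ, ← mulVec_mulVec, EMat_mulVec_basisVec hC, mulVec_smul, ih (by omega), smul_smul,
      qDescFactorial_succ, mul_comm, Nat.sub_sub, add_comm 1]

theorem FMat_pow_mulVec_basisVec (j a : ℕ) :
    FMat q n ^ a *ᵥ basisVec n j = qDescFactorial q (n - j) a • basisVec n (j + a) := by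
  induction a generalizing j with
  | zero => simp [qDescFactorial]
  | succ a ih =>
    rw [pow_succ, ← mulVec_mulVec, FMat_mulVec_basisVec, mulVec_smul, ih, smul_smul,
      qDescFactorial_succ, Nat.sub_sub, add_assoc, add_comm 1]

theorem rep_pbw_mulVec_basisVec (hq0 : q ≠ 0) {C : ℕ} (hC : C ≤ n) (a c : ℕ) (z : ℤ) :
    rep hq0 n (pbw q (a, c, z)) *ᵥ basisVec n C
      = (q ^ (z * ((n : ℤ) - 2 * C)) * qDescFactorial q C c * qDescFactorial q (n - (C - c)) a)
        • basisVec n (C - c + a) := by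
  simp only [pbw, map_mul, map_pow, rep_UqMk, genMat]
  rw [← mulVec_mulVec, ← mulVec_mulVec, rep_Kunit_zpow_mulVec, mulVec_smul, mulVec_smul,
    EMat_pow_mulVec_basisVec hC, mulVec_smul, FMat_pow_mulVec_basisVec, smul_smul, smul_smul]

theorem rep_pbw_mulVec_basisVec_apply (hq0 : q ≠ 0) {C c : ℕ} (hC : C ≤ n) (hc : C ≤ c) (a : ℕ)
    (z : ℤ) (i : Fin (n + 1)) :
    (rep hq0 n (pbw q (a, c, z)) *ᵥ basisVec n C) i
      = if a = i ∧ c = C then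
          qDescFactorial q C C * qDescFactorial q n i * q ^ (z * ((n : ℤ) - 2 * C)) else 0 := by
  rw [rep_pbw_mulVec_basisVec hq0 hC]
  rcases hc.lt_or_eq with hc | rfl
  · simp [qDescFactorial_eq_zero hc, hc.ne']
  · by_cases ha : a = i <;> simp [basisVec, ha, eq_comm (a := (i : ℕ))]
    ring

theorem rep_finsuppSum_pbw_mulVec_basisVec_apply (hq0 : q ≠ 0) (cf : ℕ × ℕ × ℤ →₀ ℂ) {C : ℕ}
    (hC : C ≤ n) (hlow : ∀ p ∈ cf.support, C ≤ p.2.1) (i : Fin (n + 1)) :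
    (rep hq0 n (cf.sum fun p t => t • pbw q p) *ᵥ basisVec n C) i
      = qDescFactorial q C C * qDescFactorial q n i *
          ∑ p ∈ cf.support with p.1 = (i : ℕ) ∧ p.2.1 = C,
            cf p * q ^ (p.2.2 * ((n : ℤ) - 2 * C)) := by
  rw [map_finsuppSum, Finsupp.sum, sum_mulVec, Finset.sum_apply, sum_filter, mul_sum]
  refine sum_congr rfl fun ⟨a, c, z⟩ hp => ?_
  rw [map_smul, smul_mulVec, Pi.smul_apply, rep_pbw_mulVec_basisVec_apply hq0 hC (hlow _ hp),
    smul_eq_mul, mul_ite, mul_zero, mul_ite, mul_zero]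
  congr 1
  dsimp only
  ring

theorem coeff_eq_zero_of_rep_eq_zero (hq0 : q ≠ 0) (hinj : Function.Injective (q ^ · : ℤ → ℂ))
    (cf : ℕ × ℕ × ℤ →₀ ℂ) (h : ∀ n, rep hq0 n (cf.sum fun p t => t • pbw q p) = 0) : cf = 0 := by
  suffices ∀ C a z, cf (a, C, z) = 0 from Finsupp.ext fun ⟨a, C, z⟩ => this C a z
  intro C
  induction C using Nat.strong_induction_on with
  | _ C ih =>
  intro a₀
  set s := cf.support.filter fun p => p.1 = a₀ ∧ p.2.1 = C
  have hlow : ∀ p ∈ cf.support, C ≤ p.2.1 := fun ⟨a, c, z⟩ hp => by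
    by_contra! hc
    exact Finsupp.mem_support_iff.mp hp (ih c hc a z)
  -- Read off the `v_{a₀}`-coordinate of `x v_C` in `V_{1,n}` for `n = a₀ + C + k`.
  have hgeom (k : ℕ) : ∑ p ∈ s, cf p * q ^ (p.2.2 * ((a₀ : ℤ) - C)) * (q ^ p.2.2) ^ k = 0 := by
    have hκ : qDescFactorial q C C * qDescFactorial q (a₀ + C + k) a₀ ≠ 0 :=
      mul_ne_zero (qDescFactorial_ne_zero hinj le_rfl) (qDescFactorial_ne_zero hinj (by omega))
    have hv := congrFun (congrArg (· *ᵥ basisVec (a₀ + C + k) C) (h (a₀ + C + k)))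
      ⟨a₀, by omega⟩
    simp only [zero_mulVec, Pi.zero_apply] at hv
    rw [rep_finsuppSum_pbw_mulVec_basisVec_apply hq0 cf (by omega) hlow] at hv
    rw [← (mul_eq_zero.mp hv).resolve_left hκ]
    refine sum_congr rfl fun p _ => ?_
    rw [mul_assoc, show ((a₀ + C + k : ℕ) : ℤ) - 2 * C = (a₀ - C) + k by push_cast; ring, mul_add,
      zpow_add₀ hq0, _root_.zpow_mul q _ k, zpow_natCast]
  have hs := eq_zero_of_sum_mul_pow_eq_zero (r := fun p => q ^ p.2.2)
    (f := fun p => cf p * q ^ (p.2.2 * ((a₀ : ℤ) - C)))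
    (fun p hp p' hp' hpp' => by
      obtain ⟨-, hp1, hp2⟩ := mem_filter.mp hp
      obtain ⟨-, hp1', hp2'⟩ := mem_filter.mp hp'
      exact Prod.ext (hp1.trans hp1'.symm) (Prod.ext (hp2.trans hp2'.symm) (hinj hpp')))
    hgeom
  intro z
  by_cases hz : (a₀, C, z) ∈ cf.support
  · exact (mul_eq_zero.mp (hs _ (mem_filter.mpr ⟨hz, rfl, rfl⟩))).resolve_right (zpow_ne_zero _ hq0)
  · exact Finsupp.notMem_support_iff.mp hz

end Representation

end Uq

/-- If q is not a root of unity, and x ∈ U_q(sl₂) lies in the kernel of every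
representation of the form V_{1,n} (the (n+1)-dimensional irreducible of type 1),
then x = 0. -/
theorem stmt7 (q : ℂ) (hq0 : q ≠ 0) (hroot : ∀ n : ℕ, 0 < n → q ^ n ≠ 1)
    (x : Uq q)
    (h : ∀ (n : ℕ) (ρ : Uq q →ₐ[ℂ] Matrix (Fin (n + 1)) (Fin (n + 1)) ℂ),
      ρ (UqMk q E) = EMat q n → ρ (UqMk q F) = FMat q n →
      ρ (UqMk q K) = KMat q n → ρ (UqMk q Kinv) = KinvMat q n →
      ρ x = 0) :
    x = 0 := by
  have hx : x ∈ Submodule.span ℂ (Set.range (Uq.pbw q)) :=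
    Uq.span_pbw_eq_top hq0 ▸ Submodule.mem_top
  obtain ⟨cf, rfl⟩ := Finsupp.mem_span_range_iff_exists_finsupp.mp hx
  have hcf : cf = 0 :=
    Uq.coeff_eq_zero_of_rep_eq_zero hq0 (Uq.zpow_injective_of_pow_ne_one hq0 hroot) cf fun n =>
      h n (Uq.rep hq0 n) (Uq.rep_UqMk hq0 n E) (Uq.rep_UqMk hq0 n F) (Uq.rep_UqMk hq0 n K)
        (Uq.rep_UqMk hq0 n Kinv)
  rw [hcf, Finsupp.sum_zero_index]

end
end

section
/- Define a coproduct on the free algebra on generators e, f, k, k^{-1} by Δ(e) = e⊗k + k^{-1}⊗e, Δ(f) = f⊗k + k^{-1}⊗f, Δ(k^{±1}) = k^{±1}⊗k^{±1}, extended as an algebra morphism. Then Δ descends to the quotient H' by the ideal generated by the relations kk^{-1}-1, k^{-1}k-1, ek+q^{-1}ke, fk+qkf, ef-fe-(q-q^{-1})(k²-k^{-2}); i.e., Δ maps each relation into the ideal of H'⊗H' generated by the relations. -/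
/-!
Both e and f are skew-primitive: Δx = x ⊗ k + k⁻¹ ⊗ x with k ⊗ k grouplike, and x k = c k x for a
scalar c (c = -q⁻¹ for e, c = -q for f). Grouplikeness preserves the k-relations, and k ⊗ k
skew-commutes with Δx by the same scalar c. In Δe Δf - Δf Δe the mixed terms cancel in pairs
because the two scalars are mutually inverse, leaving (ef - fe) ⊗ k² + k⁻² ⊗ (ef - fe), which
is Δ((q - q⁻¹)(k² - k⁻²)).
-/

noncomputable section

open TensorProduct

/-- Generators of H'. -/
inductive HGen | e | f | k | kinv

open HGen

/-- Defining relations of H'. -/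
inductive HRel {F : Type} [Field F] (q : F) : FreeAlgebra F HGen → FreeAlgebra F HGen → Prop
  | kk : HRel q (FreeAlgebra.ι F k * FreeAlgebra.ι F kinv) 1
  | kk' : HRel q (FreeAlgebra.ι F kinv * FreeAlgebra.ι F k) 1
  | ek : HRel q (FreeAlgebra.ι F e * FreeAlgebra.ι F k)
      (-q⁻¹ • (FreeAlgebra.ι F k * FreeAlgebra.ι F e))
  | fk : HRel q (FreeAlgebra.ι F f * FreeAlgebra.ι F k)
      (-q • (FreeAlgebra.ι F k * FreeAlgebra.ι F f))
  | ef : HRel q (FreeAlgebra.ι F e * FreeAlgebra.ι F f - FreeAlgebra.ι F f * FreeAlgebra.ι F e)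
      ((q - q⁻¹) • ((FreeAlgebra.ι F k) ^ 2 - (FreeAlgebra.ι F kinv) ^ 2))

/-- H' as a quotient of the free algebra. -/
abbrev Hq {F : Type} [Field F] (q : F) := RingQuot (HRel q)

/-- The images of the generators in H'. -/
def HMk {F : Type} [Field F] (q : F) (g : HGen) : Hq q :=
  RingQuot.mkAlgHom F (HRel q) (FreeAlgebra.ι F g)

/-- The coproduct on the free algebra (composed with the projection to H' ⊗ H'),
defined on generators by Δ(e) = e⊗k + k⁻¹⊗e, Δ(f) = f⊗k + k⁻¹⊗f,
Δ(k^±1) = k^±1 ⊗ k^±1, extended as an algebra morphism. -/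
def Hcomul {F : Type} [Field F] (q : F) : FreeAlgebra F HGen →ₐ[F] (Hq q ⊗[F] Hq q) :=
  FreeAlgebra.lift F fun g =>
    match g with
    | e => HMk q e ⊗ₜ HMk q k + HMk q kinv ⊗ₜ HMk q e
    | f => HMk q f ⊗ₜ HMk q k + HMk q kinv ⊗ₜ HMk q f
    | k => HMk q k ⊗ₜ HMk q k
    | kinv => HMk q kinv ⊗ₜ HMk q kinv

section SkewPrimitive

open Algebra.TensorProduct

variable {F A : Type*} [Field F] [Ring A] [Algebra F A] {x y k k' : A} {c c' d : F}

theorem inv_mul_eq_smul_mul_inv_of_mul_eq_smul (hkk' : k * k' = 1) (hk'k : k' * k = 1)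
    (hx : x * k = c • (k * x)) : k' * x = c • (x * k') :=
  calc k' * x = k' * (x * k) * k' := by rw [mul_assoc, mul_assoc, hkk', mul_one]
    _ = c • (x * k') := by rw [hx, mul_smul_comm, smul_mul_assoc, ← mul_assoc, hk'k, one_mul]

theorem skewPrimitive_mul_grouplike (hkk' : k * k' = 1) (hk'k : k' * k = 1)
    (hx : x * k = c • (k * x)) :
    (x ⊗ₜ[F] k + k' ⊗ₜ[F] x) * (k ⊗ₜ k) = c • ((k ⊗ₜ k) * (x ⊗ₜ k + k' ⊗ₜ x)) := by
  simp only [add_mul, mul_add, tmul_mul_tmul, hx, hkk', hk'k, smul_add, smul_tmul', tmul_smul]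

theorem skewPrimitive_commutator_eq (hkk' : k * k' = 1) (hk'k : k' * k = 1)
    (hx : x * k = c • (k * x)) (hy : y * k = c' • (k * y)) (hcc' : c * c' = 1)
    (hxy : x * y - y * x = d • (k ^ 2 - k' ^ 2)) :
    (x ⊗ₜ[F] k + k' ⊗ₜ[F] x) * (y ⊗ₜ k + k' ⊗ₜ y) - (y ⊗ₜ k + k' ⊗ₜ y) * (x ⊗ₜ k + k' ⊗ₜ x)
      = d • ((k ⊗ₜ k) ^ 2 - (k' ⊗ₜ k') ^ 2) := by
  have hk'x := inv_mul_eq_smul_mul_inv_of_mul_eq_smul hkk' hk'k hx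
  have hk'y := inv_mul_eq_smul_mul_inv_of_mul_eq_smul hkk' hk'k hy
  have cross_xy : (k' * x) ⊗ₜ[F] (y * k) = (x * k') ⊗ₜ[F] (k * y) := by
    rw [hk'x, hy, smul_tmul, smul_smul, hcc', one_smul]
  have cross_yx : (y * k') ⊗ₜ[F] (k * x) = (k' * y) ⊗ₜ[F] (x * k) := by
    rw [hk'y, hx, smul_tmul, smul_smul, mul_comm, hcc', one_smul]
  rw [sub_eq_iff_eq_add] at hxy
  simp only [add_mul, mul_add, tmul_mul_tmul, sq, cross_xy, cross_yx, hxy, add_tmul, tmul_add,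
    smul_tmul', tmul_smul, sub_tmul, tmul_sub, smul_sub]
  abel

end SkewPrimitive

section Relations

variable {F : Type} [Field F] (q : F)

theorem HMk_k_mul_HMk_kinv : HMk q k * HMk q kinv = 1 := by
  simpa only [HMk, map_mul, map_one] using RingQuot.mkAlgHom_rel F (HRel.kk (q := q))

theorem HMk_kinv_mul_HMk_k : HMk q kinv * HMk q k = 1 := by
  simpa only [HMk, map_mul, map_one] using RingQuot.mkAlgHom_rel F (HRel.kk' (q := q))

theorem HMk_e_mul_HMk_k : HMk q e * HMk q k = -q⁻¹ • (HMk q k * HMk q e) := by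
  simpa only [HMk, map_mul, map_smul] using RingQuot.mkAlgHom_rel F (HRel.ek (q := q))

theorem HMk_f_mul_HMk_k : HMk q f * HMk q k = -q • (HMk q k * HMk q f) := by
  simpa only [HMk, map_mul, map_smul] using RingQuot.mkAlgHom_rel F (HRel.fk (q := q))

theorem HMk_e_mul_HMk_f_sub : HMk q e * HMk q f - HMk q f * HMk q e
    = (q - q⁻¹) • (HMk q k ^ 2 - HMk q kinv ^ 2) := by
  simpa only [HMk, map_mul, map_smul, map_sub, map_pow] using RingQuot.mkAlgHom_rel F (HRel.ef (q := q))

end Relations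

section Coproduct

variable {F : Type} [Field F] (q : F)

theorem Hcomul_ι_e :
    Hcomul q (FreeAlgebra.ι F e) = HMk q e ⊗ₜ HMk q k + HMk q kinv ⊗ₜ HMk q e :=
  FreeAlgebra.lift_ι_apply _ _

theorem Hcomul_ι_f :
    Hcomul q (FreeAlgebra.ι F f) = HMk q f ⊗ₜ HMk q k + HMk q kinv ⊗ₜ HMk q f :=
  FreeAlgebra.lift_ι_apply _ _

theorem Hcomul_ι_k : Hcomul q (FreeAlgebra.ι F k) = HMk q k ⊗ₜ HMk q k :=
  FreeAlgebra.lift_ι_apply _ _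

theorem Hcomul_ι_kinv : Hcomul q (FreeAlgebra.ι F kinv) = HMk q kinv ⊗ₜ HMk q kinv :=
  FreeAlgebra.lift_ι_apply _ _

end Coproduct

theorem stmt13_general {F : Type} [Field F] (q : F) (hq0 : q ≠ 0) :
    ∀ a b : FreeAlgebra F HGen, HRel q a b → Hcomul q a = Hcomul q b := by
  intro a b h
  have hkk' := HMk_k_mul_HMk_kinv q
  have hk'k := HMk_kinv_mul_HMk_k q
  cases h with
  | kk =>
    simp only [map_mul, map_one, Hcomul_ι_k, Hcomul_ι_kinv, Algebra.TensorProduct.tmul_mul_tmul,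
      hkk', Algebra.TensorProduct.one_def]
  | kk' =>
    simp only [map_mul, map_one, Hcomul_ι_k, Hcomul_ι_kinv, Algebra.TensorProduct.tmul_mul_tmul,
      hk'k, Algebra.TensorProduct.one_def]
  | ek =>
    simpa only [map_mul, map_smul, Hcomul_ι_e, Hcomul_ι_k] using
      skewPrimitive_mul_grouplike hkk' hk'k (HMk_e_mul_HMk_k q)
  | fk =>
    simpa only [map_mul, map_smul, Hcomul_ι_f, Hcomul_ι_k] using
      skewPrimitive_mul_grouplike hkk' hk'k (HMk_f_mul_HMk_k q)
  | ef =>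
    have hq : -q⁻¹ * -q = 1 := by rw [neg_mul_neg, inv_mul_cancel₀ hq0]
    simpa only [map_mul, map_sub, map_smul, map_pow, Hcomul_ι_e, Hcomul_ι_f, Hcomul_ι_k,
      Hcomul_ι_kinv] using skewPrimitive_commutator_eq hkk' hk'k (HMk_e_mul_HMk_k q)
        (HMk_f_mul_HMk_k q) hq (HMk_e_mul_HMk_f_sub q)

/-- The coproduct descends to the quotient H': it maps each defining relation of H'
into the corresponding ideal, i.e. it identifies the two sides of each relation after
projecting to H' ⊗ H'. -/
theorem stmt13 {F : Type} [Field F] (q : F) (hq0 : q ≠ 0) (hq1 : q ≠ 1) (hqm1 : q ≠ -1) :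
    ∀ a b : FreeAlgebra F HGen, HRel q a b → Hcomul q a = Hcomul q b :=
  stmt13_general q hq0

end
end

section
/- In H' (generators e, f, k^{±1}; relations kk^{-1}=k^{-1}k=1, ek=-q^{-1}ke, fk=-qkf, ef-fe=(q-q^{-1})(k²-k^{-2})), every word of even length in the generators e, f, k, k^{-1} is equal to a power of (-q) times a product of the elements K^{±1}=k^{±2}, E=ek, F'=k^{-1}f. In particular, the span of even-length words is a subalgebra generated by k², k^{-2}, ek, and k^{-1}f. -/
/-- In H' (formalized for any F-algebra with elements e, f, k, k⁻¹ satisfying the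
relations), every word of even length in the generators e, f, k, k⁻¹ equals a power
of (-q) times a product of the elements K = k², K⁻¹ = k⁻², E = ek and F' = k⁻¹f. -/
theorem stmt15 {F : Type*} [Field F] (q : F) (hq0 : q ≠ 0) (hq1 : q ≠ 1) (hqm1 : q ≠ -1)
    {A : Type*} [Ring A] [Algebra F A] (e f k k' : A)
    (hkk' : k * k' = 1) (hk'k : k' * k = 1)
    (hek : e * k = -q⁻¹ • (k * e))
    (hfk : f * k = -q • (k * f))
    (heff : e * f - f * e = (q - q⁻¹) • (k ^ 2 - k' ^ 2)) :
    ∀ w : List (Fin 4), Even w.length →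
      ∃ (m : ℤ) (v : List (Fin 4)),
        (w.map ![e, f, k, k']).prod
          = ((-q) ^ m) • (v.map ![e * k, k' * f, k ^ 2, k' ^ 2]).prod := by
  have hnq : (-q : F) ≠ 0 := neg_ne_zero.mpr hq0
  set g : Fin 4 → A := ![e * k, k' * f, k ^ 2, k' ^ 2] with hg
  have K1 : ∀ x : A, k * (k' * x) = x := fun x => by rw [← mul_assoc, hkk', one_mul]
  have K2 : ∀ x : A, k' * (k * x) = x := fun x => by rw [← mul_assoc, hk'k, one_mul]
  have hek' : e * k = (-q)⁻¹ • (k * e) := by rw [hek, inv_neg]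
  have hke : k * e = (-q) • (e * k) := by
    rw [hek', smul_smul, mul_inv_cancel₀ hnq, one_smul]
  have hkf : k * f = (-q)⁻¹ • (f * k) := by
    rw [hfk, smul_smul, inv_mul_cancel₀ hnq, one_smul]
  have hk'e : k' * e = (-q)⁻¹ • (e * k') := by
    have h := congrArg (fun x => k' * x * k') hek
    simp only [mul_assoc] at h
    simpa [K1, K2, hkk', hk'k, mul_smul_comm, smul_mul_assoc, mul_assoc, inv_neg] using h
  have hk'f : k' * f = (-q) • (f * k') := by
    have h := congrArg (fun x => k' * x * k') hfk
    simp only [mul_assoc] at h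
    simpa [K1, K2, hkk', hk'k, mul_smul_comm, smul_mul_assoc, mul_assoc] using h
  -- moving k, k' past single generators
  have sgk : ∀ a : Fin 4, ∃ ε : ℤ, k * g a = ((-q) ^ ε) • (g a * k) := by
    intro a; fin_cases a
    · refine ⟨1, ?_⟩
      show k * (e * k) = ((-q) ^ (1 : ℤ)) • ((e * k) * k)
      rw [← mul_assoc, hke, smul_mul_assoc, zpow_one]
    · refine ⟨-1, ?_⟩
      show k * (k' * f) = ((-q) ^ (-1 : ℤ)) • ((k' * f) * k)
      rw [K1, mul_assoc, hfk, mul_smul_comm, K2, smul_smul, zpow_neg_one,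
        inv_mul_cancel₀ hnq, one_smul]
    · refine ⟨0, ?_⟩
      show k * k ^ 2 = ((-q) ^ (0 : ℤ)) • (k ^ 2 * k)
      rw [zpow_zero, one_smul, ← pow_succ, ← pow_succ']
    · refine ⟨0, ?_⟩
      show k * k' ^ 2 = ((-q) ^ (0 : ℤ)) • (k' ^ 2 * k)
      rw [zpow_zero, one_smul, pow_two, K1, mul_assoc, hk'k, mul_one]
  have sgk' : ∀ a : Fin 4, ∃ ε : ℤ, k' * g a = ((-q) ^ ε) • (g a * k') := by
    intro a; fin_cases a
    · refine ⟨-1, ?_⟩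
      show k' * (e * k) = ((-q) ^ (-1 : ℤ)) • ((e * k) * k')
      rw [← mul_assoc, hk'e, smul_mul_assoc, mul_assoc, hk'k, mul_one,
        mul_assoc, hkk', mul_one, zpow_neg_one]
    · refine ⟨1, ?_⟩
      show k' * (k' * f) = ((-q) ^ (1 : ℤ)) • ((k' * f) * k')
      rw [mul_assoc, hk'f, mul_smul_comm, zpow_one]
    · refine ⟨0, ?_⟩
      show k' * k ^ 2 = ((-q) ^ (0 : ℤ)) • (k ^ 2 * k')
      rw [zpow_zero, one_smul, pow_two, K2, mul_assoc, hkk', mul_one]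
    · refine ⟨0, ?_⟩
      show k' * k' ^ 2 = ((-q) ^ (0 : ℤ)) • (k' ^ 2 * k')
      rw [zpow_zero, one_smul, ← pow_succ, ← pow_succ']
  -- moving k, k' past generator words
  have commgen : ∀ (s : A), (∀ a : Fin 4, ∃ ε : ℤ, s * g a = ((-q) ^ ε) • (g a * s)) →
      ∀ v : List (Fin 4),
      ∃ m : ℤ, s * (v.map g).prod = ((-q) ^ m) • ((v.map g).prod * s) := by
    intro s hs v
    induction v with
    | nil => exact ⟨0, by simp⟩
    | cons a v ih =>
      obtain ⟨m, hm⟩ := ih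
      obtain ⟨ε, hε⟩ := hs a
      refine ⟨ε + m, ?_⟩
      rw [List.map_cons, List.prod_cons, ← mul_assoc, hε, smul_mul_assoc,
        mul_assoc, hm, mul_smul_comm, smul_smul, ← zpow_add₀ hnq, ← mul_assoc]
  have commk := commgen k sgk
  have commk' := commgen k' sgk'
  -- main strengthened statement
  have main : ∀ w : List (Fin 4),
      ∃ (m : ℤ) (v : List (Fin 4)) (t : A),
        ((Even w.length ∧ t = 1) ∨ (¬ Even w.length ∧ (t = k ∨ t = k'))) ∧
        (w.map ![e, f, k, k']).prod = ((-q) ^ m) • ((v.map g).prod * t) := by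
    intro w
    induction w with
    | nil => exact ⟨0, [], 1, Or.inl ⟨Even.zero, rfl⟩, by simp⟩
    | cons a w ih =>
      obtain ⟨m, v, t, ht, hp⟩ := ih
      -- decompose the head letter
      have key : ∃ (μ : ℤ) (u : List (Fin 4)) (s : A), (s = k ∨ s = k') ∧
          (![e, f, k, k'] a) * (v.map g).prod
            = ((-q) ^ μ) • (((u.map g).prod) * s) := by
        fin_cases a
        · -- e = (e*k) * k'
          obtain ⟨m₁, hm₁⟩ := commk' v
          refine ⟨m₁, 0 :: v, k', Or.inr rfl, ?_⟩
          show e * (v.map g).prod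
            = ((-q) ^ m₁) • ((((0 : Fin 4) :: v).map g).prod * k')
          rw [List.map_cons, List.prod_cons, show g 0 = e * k from rfl]
          calc e * (v.map g).prod
              = (e * k) * (k' * (v.map g).prod) := by rw [mul_assoc, K1]
            _ = (e * k) * (((-q) ^ m₁) • ((v.map g).prod * k')) := by rw [hm₁]
            _ = ((-q) ^ m₁) • ((e * k) * (v.map g).prod * k') := by
                rw [mul_smul_comm, ← mul_assoc]
        · -- f = (-q)⁻¹ • ((k'*f) * k)
          obtain ⟨m₁, hm₁⟩ := commk v
          have hf : f = ((-q) ^ (-1 : ℤ)) • ((k' * f) * k) := by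
            rw [mul_assoc, hfk, mul_smul_comm, K2, smul_smul, zpow_neg_one,
              inv_mul_cancel₀ hnq, one_smul]
          refine ⟨-1 + m₁, 1 :: v, k, Or.inl rfl, ?_⟩
          show f * (v.map g).prod
            = ((-q) ^ (-1 + m₁)) • ((((1 : Fin 4) :: v).map g).prod * k)
          rw [List.map_cons, List.prod_cons, show g 1 = k' * f from rfl]
          conv_lhs => rw [hf]
          rw [smul_mul_assoc, mul_assoc, hm₁, mul_smul_comm, smul_smul,
            ← zpow_add₀ hnq, ← mul_assoc]
        · obtain ⟨m₁, hm₁⟩ := commk v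
          exact ⟨m₁, v, k, Or.inl rfl, hm₁⟩
        · obtain ⟨m₁, hm₁⟩ := commk' v
          exact ⟨m₁, v, k', Or.inr rfl, hm₁⟩
      obtain ⟨μ, u, s, hs, hkey⟩ := key
      have hprod : ((a :: w).map ![e, f, k, k']).prod
          = ((-q) ^ (m + μ)) • ((u.map g).prod * (s * t)) := by
        rw [List.map_cons, List.prod_cons, hp, mul_smul_comm, ← mul_assoc, hkey,
          smul_mul_assoc, smul_smul, ← zpow_add₀ hnq, mul_assoc]
      have happ : ∀ (i : Fin 4), ((u ++ [i]).map g).prod = (u.map g).prod * g i := by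
        intro i; rw [List.map_append, List.prod_append]; simp
      rcases ht with ⟨hev, rfl⟩ | ⟨hodd, ht⟩
      · have hodd' : ¬ Even ((a :: w).length) := by
          simp [List.length_cons, Nat.even_add_one, hev]
        exact ⟨m + μ, u, s, Or.inr ⟨hodd', hs⟩, by rw [hprod, mul_one]⟩
      · have heven : Even ((a :: w).length) := by
          simp [List.length_cons, Nat.even_add_one, hodd]
        rcases hs with hs | hs <;> rcases ht with ht | ht
        · refine ⟨m + μ, u ++ [2], 1, Or.inl ⟨heven, rfl⟩, ?_⟩
          rw [hprod, happ, mul_one, hs, ht]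
          show ((-q) ^ (m + μ)) • ((u.map g).prod * (k * k))
            = ((-q) ^ (m + μ)) • ((u.map g).prod * k ^ 2)
          rw [pow_two]
        · exact ⟨m + μ, u, 1, Or.inl ⟨heven, rfl⟩,
            by rw [hprod, hs, ht, hkk', mul_one]⟩
        · exact ⟨m + μ, u, 1, Or.inl ⟨heven, rfl⟩,
            by rw [hprod, hs, ht, hk'k, mul_one]⟩
        · refine ⟨m + μ, u ++ [3], 1, Or.inl ⟨heven, rfl⟩, ?_⟩
          rw [hprod, happ, mul_one, hs, ht]
          show ((-q) ^ (m + μ)) • ((u.map g).prod * (k' * k'))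
            = ((-q) ^ (m + μ)) • ((u.map g).prod * k' ^ 2)
          rw [pow_two]
  intro w hw
  obtain ⟨m, v, t, ht, hp⟩ := main w
  rcases ht with ⟨_, rfl⟩ | ⟨h, _⟩
  · exact ⟨m, v, by rw [hp, mul_one]⟩
  · exact absurd hw h
end
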